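/- Let G be a bipartite graph on finite buyer set B and seller set S with strictly positive demands D : B → ℝ>0 and supplies Sup : S → ℝ>0 such that within every connected component the total supply equals the total demand. If every trading session on G is feasible (reduces all demands to zero), then every connected component of G is a complete bipartite graph (every buyer in the component is linked to every seller in the component). -/

import Mathlib

open scoped Classical

/-- A trading state: current demands of buyers and supplies of sellers. -/
structure TState (B S : Type*) where
  dem : B → ℝ
  sup : S → ℝ

/-- One trade on link `(b, s)`: the maximal amount `min (dem b) (sup s)` is
transferred, leaving demand `max 0 (dem b - sup s)` and supply
`max 0 (sup s - dem b)`; all other values are unchanged. -/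
def trade {B S : Type*} [DecidableEq B] [DecidableEq S]
    (st : TState B S) (l : B × S) : TState B S where
  dem := Function.update st.dem l.1 (max 0 (st.dem l.1 - st.sup l.2))
  sup := Function.update st.sup l.2 (max 0 (st.sup l.2 - st.dem l.1))

/-- Execute a sequence of trades in order. -/
def runSession {B S : Type*} [DecidableEq B] [DecidableEq S]
    (st : TState B S) (seq : List (B × S)) : TState B S :=
  seq.foldl trade st

/-- The bipartite graph on `B ⊕ S` induced by the link set `L`. -/
def linkGraph {B S : Type*} (L : Finset (B × S)) : SimpleGraph (B ⊕ S) where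
  Adj v w := ∃ p ∈ L, (v = Sum.inl p.1 ∧ w = Sum.inr p.2) ∨ (v = Sum.inr p.2 ∧ w = Sum.inl p.1)
  symm := ⟨by rintro v w ⟨p, hp, h | h⟩ <;> exact ⟨p, hp, by tauto⟩⟩
  loopless := ⟨by rintro v ⟨p, hp, ⟨rfl, h⟩ | ⟨rfl, h⟩⟩ <;> simp_all⟩

/-!
Induction on the number of links. Trading a few links first leaves a smaller successful market
on the links whose two ends are still active, so by induction its components are complete. In
any successful market a set of vertices closed under the links has zero imbalance (demand minus
supply): trades inside or outside the set do not change it, and a feasible session ends with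
nothing left. If a component contained a path `b – s₁ – b₁ – s₂` without the link `(b, s₂)`,
then two different orders of the first trades at `b₁` and `s₁` produce a closed set whose
imbalance would have to be both zero and nonzero.
-/

open Finset Sum SimpleGraph

section Trades

variable {B S : Type*}

def TState.Nonneg (st : TState B S) : Prop := (∀ x, 0 ≤ st.dem x) ∧ ∀ y, 0 ≤ st.sup y

def Dead (st : TState B S) (l : B × S) : Prop := st.dem l.1 = 0 ∨ st.sup l.2 = 0

variable [DecidableEq B] [DecidableEq S]

@[simp]
lemma trade_dem_apply (st : TState B S) (l : B × S) (x : B) :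
    (trade st l).dem x = if x = l.1 then max 0 (st.dem l.1 - st.sup l.2) else st.dem x := by
  simp [trade, Function.update_apply]

@[simp]
lemma trade_sup_apply (st : TState B S) (l : B × S) (y : S) :
    (trade st l).sup y = if y = l.2 then max 0 (st.sup l.2 - st.dem l.1) else st.sup y := by
  simp [trade, Function.update_apply]

lemma runSession_cons (st : TState B S) (l : B × S) (seq : List (B × S)) :
    runSession st (l :: seq) = runSession (trade st l) seq := rfl

lemma runSession_append (st : TState B S) (seq seq' : List (B × S)) :
    runSession st (seq ++ seq') = runSession (runSession st seq) seq' := List.foldl_append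

lemma nonneg_trade {st : TState B S} (h : st.Nonneg) (l : B × S) :
    (trade st l).Nonneg := by
  constructor <;> intro x <;> simp only [trade_dem_apply, trade_sup_apply] <;>
    split_ifs <;> first | exact le_max_left _ _ | exact h.1 x | exact h.2 x

lemma nonneg_runSession {st : TState B S} (h : st.Nonneg) (seq : List (B × S)) :
    (runSession st seq).Nonneg := by
  induction seq generalizing st with
  | nil => exact h
  | cons l seq ih => exact ih (nonneg_trade h l)

lemma trade_dem_le {st : TState B S} (h : st.Nonneg) (l : B × S) (x : B) :
    (trade st l).dem x ≤ st.dem x := by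
  have := h.1 x; have := h.2 l.2
  simp only [trade_dem_apply]
  split_ifs with hx
  · subst hx; exact max_le this (by linarith)
  · rfl

lemma trade_sup_le {st : TState B S} (h : st.Nonneg) (l : B × S) (y : S) :
    (trade st l).sup y ≤ st.sup y := by
  have := h.2 y; have := h.1 l.1
  simp only [trade_sup_apply]
  split_ifs with hy
  · subst hy; exact max_le this (by linarith)
  · rfl

lemma runSession_dem_le {st : TState B S} (h : st.Nonneg) (seq : List (B × S))
    (x : B) : (runSession st seq).dem x ≤ st.dem x := by
  induction seq generalizing st with
  | nil => rfl
  | cons l seq ih => exact (ih (nonneg_trade h l)).trans (trade_dem_le h l x)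

lemma runSession_sup_le {st : TState B S} (h : st.Nonneg) (seq : List (B × S))
    (y : S) : (runSession st seq).sup y ≤ st.sup y := by
  induction seq generalizing st with
  | nil => rfl
  | cons l seq ih => exact (ih (nonneg_trade h l)).trans (trade_sup_le h l y)

lemma dead_trade (st : TState B S) (l : B × S) : Dead (trade st l) l := by
  rcases le_total (st.dem l.1) (st.sup l.2) with h | h
  · left; simpa using h
  · right; simpa using h

lemma dead_runSession {st : TState B S} (h : st.Nonneg) {l : B × S}
    (hl : Dead st l) (seq : List (B × S)) : Dead (runSession st seq) l := by
  have hd := (nonneg_runSession h seq).1 l.1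
  have hs := (nonneg_runSession h seq).2 l.2
  have := runSession_dem_le h seq l.1
  have := runSession_sup_le h seq l.2
  rcases hl with hl | hl
  · left; linarith
  · right; linarith

lemma dead_runSession_of_mem {st : TState B S} (h : st.Nonneg) {l : B × S}
    {seq : List (B × S)} (hl : l ∈ seq) : Dead (runSession st seq) l := by
  induction seq generalizing st with
  | nil => simp at hl
  | cons l' seq ih =>
    rw [runSession_cons]
    rcases List.mem_cons.1 hl with rfl | hl
    · exact dead_runSession (nonneg_trade h l) (dead_trade st l) seq
    · exact ih (nonneg_trade h l') hl

lemma trade_eq_self {st : TState B S} (h : st.Nonneg) {l : B × S}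
    (hl : Dead st l) : trade st l = st := by
  have hd := h.1 l.1; have hs := h.2 l.2
  obtain ⟨dem, sup⟩ := st
  simp only [trade, TState.mk.injEq, Function.update_eq_self_iff]
  rcases hl with hl | hl <;> dsimp only at hl hd hs <;> rw [hl, sub_zero]
  · exact ⟨max_eq_left (by linarith), max_eq_right hs⟩
  · exact ⟨max_eq_right hd, max_eq_left (by linarith)⟩

lemma runSession_eq_self {st : TState B S} (h : st.Nonneg) {seq : List (B × S)}
    (hseq : ∀ l ∈ seq, Dead st l) : runSession st seq = st := by
  induction seq with
  | nil => rfl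
  | cons l seq ih =>
    rw [runSession_cons, trade_eq_self h (hseq l List.mem_cons_self)]
    exact ih fun l' hl' => hseq l' (List.mem_cons_of_mem _ hl')

lemma runSession_dem_of_forall_ne (st : TState B S) {seq : List (B × S)} {x : B}
    (hseq : ∀ l ∈ seq, l.1 ≠ x) : (runSession st seq).dem x = st.dem x := by
  induction seq generalizing st with
  | nil => rfl
  | cons l seq ih =>
    rw [runSession_cons, ih _ fun l' hl' => hseq l' (List.mem_cons_of_mem _ hl')]
    simp [(hseq l List.mem_cons_self).symm]

end Trades

section LinkGraph

variable {B S : Type*}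

@[simp]
lemma linkGraph_adj_inl_inr {L : Finset (B × S)} {b : B} {s : S} :
    (linkGraph L).Adj (inl b) (inr s) ↔ (b, s) ∈ L := by
  simp [linkGraph]

@[simp]
lemma linkGraph_not_adj_inl_inl (L : Finset (B × S)) (b b' : B) :
    ¬ (linkGraph L).Adj (inl b) (inl b') := by
  simp [linkGraph]

@[simp]
lemma linkGraph_not_adj_inr_inr (L : Finset (B × S)) (s s' : S) :
    ¬ (linkGraph L).Adj (inr s) (inr s') := by
  simp [linkGraph]

lemma exists_mem_of_reachable_inl {L : Finset (B × S)} {v : B ⊕ S} {b : B}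
    (h : (linkGraph L).Reachable v (inl b)) (hv : v ≠ inl b) : ∃ s, (b, s) ∈ L := by
  obtain ⟨_ | ⟨hadj, -⟩⟩ := h.symm
  · exact absurd rfl hv
  · rename_i w
    rcases w with b' | s
    · simp at hadj
    · exact ⟨s, by simpa using hadj⟩

lemma exists_mem_of_reachable_inr {L : Finset (B × S)} {v : B ⊕ S} {s : S}
    (h : (linkGraph L).Reachable v (inr s)) (hv : v ≠ inr s) : ∃ b, (b, s) ∈ L := by
  obtain ⟨_ | ⟨hadj, -⟩⟩ := h.symm
  · exact absurd rfl hv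
  · rename_i w
    rcases w with b | s'
    · exact ⟨b, by simpa using hadj.symm⟩
    · simp at hadj

def ComponentsComplete (L : Finset (B × S)) : Prop :=
  ∀ b s, (linkGraph L).Reachable (inl b) (inr s) → (b, s) ∈ L

lemma componentsComplete_of_path {L : Finset (B × S)}
    (hL : ∀ b b₁ s₁ s₂, (b, s₁) ∈ L → (b₁, s₁) ∈ L → (b₁, s₂) ∈ L → (b, s₂) ∈ L) :
    ComponentsComplete L := by
  suffices ∀ n b s (p : (linkGraph L).Walk (inl b) (inr s)), p.length ≤ n → (b, s) ∈ L from
    fun b s ⟨p⟩ => this _ b s p le_rfl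
  intro n
  induction n using Nat.strong_induction_on with
  | _ n ih =>
    rintro b s (_ | ⟨hadj, p⟩) hlen
    rename_i w
    rcases w with b' | s₁
    · simp at hadj
    cases p with
    | nil => simpa using hadj
    | cons hadj' q =>
      rename_i w
      rcases w with b₁ | s'
      · simp only [Walk.length_cons] at hlen
        exact hL b b₁ s₁ s (by simpa using hadj) (by simpa using hadj'.symm)
          (ih q.length (by omega) b₁ s q le_rfl)
      · simp at hadj'

variable [Fintype B] [Fintype S]

noncomputable def component (L : Finset (B × S)) (v : B ⊕ S) : Finset (B ⊕ S) :=
  univ.filter ((linkGraph L).Reachable v)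

@[simp]
lemma mem_component {L : Finset (B × S)} {v w : B ⊕ S} :
    w ∈ component L v ↔ (linkGraph L).Reachable v w := by
  simp [component]

def LinkClosed (L : Finset (B × S)) (C : Finset (B ⊕ S)) : Prop :=
  ∀ p ∈ L, (inl p.1 ∈ C ↔ inr p.2 ∈ C)

lemma linkClosed_component {L L' : Finset (B × S)} (h : L' ⊆ L) (v : B ⊕ S) :
    LinkClosed L' (component L v) := by
  intro p hp
  have hadj : (linkGraph L).Adj (inl p.1) (inr p.2) := by simpa using h hp
  simp only [mem_component]
  exact ⟨fun hv => hv.trans hadj.reachable, fun hv => hv.trans hadj.symm.reachable⟩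

end LinkGraph

section Imbalance

variable {B S : Type*}

def charge (st : TState B S) : B ⊕ S → ℝ := Sum.elim st.dem fun s => -st.sup s

def imbalance (C : Finset (B ⊕ S)) (st : TState B S) : ℝ := ∑ v ∈ C, charge st v

@[simp] lemma charge_inl (st : TState B S) (b : B) : charge st (inl b) = st.dem b := rfl

@[simp] lemma charge_inr (st : TState B S) (s : S) : charge st (inr s) = -st.sup s := rfl

lemma imbalance_insert [DecidableEq (B ⊕ S)] {C : Finset (B ⊕ S)} {v : B ⊕ S} (hv : v ∉ C)
    (st : TState B S) :
    imbalance (insert v C) st = charge st v + imbalance C st :=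
  sum_insert hv

lemma imbalance_univ [Fintype B] [Fintype S] (st : TState B S) :
    imbalance univ st = ∑ b, st.dem b - ∑ s, st.sup s := by
  simp [imbalance, Fintype.sum_sum_type, sub_eq_add_neg]

variable [DecidableEq B] [DecidableEq S]

lemma charge_trade (st : TState B S) (l : B × S) (v : B ⊕ S) :
    charge (trade st l) v = charge st v - (if v = inl l.1 then min (st.dem l.1) (st.sup l.2) else 0)
      + (if v = inr l.2 then min (st.dem l.1) (st.sup l.2) else 0) := by
  have key (a c : ℝ) : max 0 (a - c) = a - min a c := by rw [← max_sub_sub_left, sub_self]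
  rcases v with x | y
  · by_cases hx : x = l.1
    · subst hx; simp [key]
    · simp [hx]
  · by_cases hy : y = l.2
    · subst hy; simp [key, min_comm]; ring
    · simp [hy]

lemma imbalance_trade (C : Finset (B ⊕ S)) (st : TState B S) (l : B × S) :
    imbalance C (trade st l) = imbalance C st
      - (if inl l.1 ∈ C then min (st.dem l.1) (st.sup l.2) else 0)
      + (if inr l.2 ∈ C then min (st.dem l.1) (st.sup l.2) else 0) := by
  simp only [imbalance, charge_trade, sum_add_distrib, sum_sub_distrib, sum_ite_eq']

lemma imbalance_trade_of_iff {C : Finset (B ⊕ S)} (st : TState B S) {l : B × S}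
    (hl : inl l.1 ∈ C ↔ inr l.2 ∈ C) : imbalance C (trade st l) = imbalance C st := by
  rw [imbalance_trade]
  by_cases h : inl l.1 ∈ C <;> simp [h, hl.1, mt hl.2]

lemma imbalance_runSession {C : Finset (B ⊕ S)} (st : TState B S) {seq : List (B × S)}
    (hseq : ∀ l ∈ seq, inl l.1 ∈ C ↔ inr l.2 ∈ C) :
    imbalance C (runSession st seq) = imbalance C st := by
  induction seq generalizing st with
  | nil => rfl
  | cons l seq ih =>
    rw [runSession_cons, ih _ fun l' hl' => hseq l' (List.mem_cons_of_mem _ hl'),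
      imbalance_trade_of_iff _ (hseq l List.mem_cons_self)]

lemma sum_dem_sub_sum_sup_runSession [Fintype B] [Fintype S] (st : TState B S)
    (seq : List (B × S)) :
    ∑ b, (runSession st seq).dem b - ∑ s, (runSession st seq).sup s
      = ∑ b, st.dem b - ∑ s, st.sup s := by
  rw [← imbalance_univ, ← imbalance_univ, imbalance_runSession st (by simp)]

end Imbalance

section SuccessfulMarkets

variable {B S : Type*}

noncomputable def alive (L : Finset (B × S)) (st : TState B S) : Finset (B × S) :=
  L.filter fun p => 0 < st.dem p.1 ∧ 0 < st.sup p.2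

lemma alive_subset (L : Finset (B × S)) (st : TState B S) : alive L st ⊆ L := filter_subset _ _

lemma mem_alive {L : Finset (B × S)} {st : TState B S} {p : B × S} :
    p ∈ alive L st ↔ p ∈ L ∧ 0 < st.dem p.1 ∧ 0 < st.sup p.2 := mem_filter

lemma notMem_alive_of_dead {L : Finset (B × S)} {st : TState B S} {p : B × S} (h : Dead st p) :
    p ∉ alive L st := by
  rcases h with h | h <;> simp [mem_alive, h]

lemma dem_pos_of_mem_component [Fintype B] [Fintype S] {L : Finset (B × S)}
    {st : TState B S} {v : B ⊕ S} {x : B} (h : inl x ∈ component (alive L st) v)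
    (hv : v ≠ inl x) : 0 < st.dem x := by
  obtain ⟨s, hs⟩ := exists_mem_of_reachable_inl (mem_component.1 h) hv
  exact (mem_alive.1 hs).2.1

lemma sup_pos_of_mem_component [Fintype B] [Fintype S] {L : Finset (B × S)}
    {st : TState B S} {v : B ⊕ S} {y : S} (h : inr y ∈ component (alive L st) v)
    (hv : v ≠ inr y) : 0 < st.sup y := by
  obtain ⟨b, hb⟩ := exists_mem_of_reachable_inr (mem_component.1 h) hv
  exact (mem_alive.1 hb).2.2

variable [DecidableEq B] [DecidableEq S]

lemma alive_ssubset {L : Finset (B × S)} {st : TState B S} (h : st.Nonneg) {seq : List (B × S)}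
    {l : B × S} (hl : l ∈ seq) (hlL : l ∈ L) : alive L (runSession st seq) ⊂ L :=
  (ssubset_iff_of_subset (alive_subset L _)).2
    ⟨l, hlL, notMem_alive_of_dead (dead_runSession_of_mem h hl)⟩

variable [Fintype B] [Fintype S]

structure Successful (L : Finset (B × S)) (st : TState B S) : Prop where
  nonneg : st.Nonneg
  pos : ∀ p ∈ L, 0 < st.dem p.1 ∧ 0 < st.sup p.2
  sum_eq : ∑ b, st.dem b = ∑ s, st.sup s
  feasible : ∀ seq : List (B × S), seq.Perm L.toList → ∀ b, (runSession st seq).dem b = 0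

namespace Successful

variable {L : Finset (B × S)} {st : TState B S}

/-- At the end of a feasible session the supplies are exhausted too, so the imbalance of a
link-closed set, which no trade changes, was zero from the start. -/
theorem imbalance_eq_zero (hG : Successful L st) {C : Finset (B ⊕ S)} (hC : LinkClosed L C) :
    imbalance C st = 0 := by
  have hdem : ∀ b, (runSession st L.toList).dem b = 0 := hG.feasible _ (List.Perm.refl _)
  have hsup : ∀ s, (runSession st L.toList).sup s = 0 := by
    have hsum := sum_dem_sub_sum_sup_runSession st L.toList
    simp only [hdem, sum_const_zero, zero_sub, hG.sum_eq, sub_self, neg_eq_zero] at hsum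
    exact fun s => (sum_eq_zero_iff_of_nonneg fun s _ =>
      (nonneg_runSession hG.nonneg _).2 s).1 hsum s (mem_univ s)
  rw [← imbalance_runSession st fun l hl => hC l (mem_toList.1 hl)]
  refine sum_eq_zero fun v _ => ?_
  rcases v with b | s <;> simp [hdem, hsup]

theorem exists_mem_of_dem_pos (hG : Successful L st) {b : B} (hb : 0 < st.dem b) :
    ∃ s, (b, s) ∈ L := by
  by_contra! h
  have := hG.feasible _ (List.Perm.refl _) b
  rw [runSession_dem_of_forall_ne st fun l hl hlb =>
    h l.2 (by rw [← hlb]; exact mem_toList.1 hl)] at this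
  exact hb.ne' this

theorem mem_alive_trade (hG : Successful L st) {p : B × S} (hp : p ∈ L) {x : B} {y : S}
    (hx : p.1 = x → st.sup y < st.dem x) (hy : p.2 = y → st.dem x < st.sup y) :
    p ∈ alive L (trade st (x, y)) := by
  obtain ⟨hd, hs⟩ := hG.pos p hp
  refine mem_alive.2 ⟨hp, ?_, ?_⟩
  · by_cases h : p.1 = x
    · have := hx h; subst h; simpa using this
    · simpa [h] using hd
  · by_cases h : p.2 = y
    · have := hy h; subst h; simpa using this
    · simpa [h] using hs

/-- Trading a prefix `π` first leaves a successful market on the links still alive: any session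
on them extends, by `π` in front and the dead links behind, to a session on `L`. -/
theorem runSession_prefix (hG : Successful L st) {π : List (B × S)} (hnd : π.Nodup)
    (hπ : ∀ l ∈ π, l ∈ L) : Successful (alive L (runSession st π)) (runSession st π) := by
  have hnn : (runSession st π).Nonneg := nonneg_runSession hG.nonneg π
  refine ⟨hnn, fun p hp => (mem_alive.1 hp).2, ?_, ?_⟩
  · linarith [sum_dem_sub_sum_sup_runSession st π, hG.sum_eq]
  intro σ hσ b
  let A := alive L (runSession st π)
  let rest := (L \ (A ∪ π.toFinset)).toList
  have hσA : ∀ l, l ∈ σ ↔ l ∈ A := fun l => by rw [hσ.mem_iff, mem_toList]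
  have hπA : ∀ l ∈ π, l ∉ A := fun l hl =>
    notMem_alive_of_dead (dead_runSession_of_mem hG.nonneg hl)
  have hperm : (π ++ σ ++ rest).Perm L.toList := by
    refine List.perm_of_nodup_nodup_toFinset_eq ?_ (nodup_toList L) ?_
    · refine List.nodup_append.2 ⟨List.nodup_append.2 ⟨hnd, hσ.nodup_iff.2 (nodup_toList _), ?_⟩,
        nodup_toList _, ?_⟩
      · rintro l hl l' hl' rfl; exact hπA l hl ((hσA l).1 hl')
      · rintro l hl l' hl' rfl
        simp only [rest, mem_toList, mem_sdiff, mem_union, List.mem_toFinset] at hl'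
        rcases List.mem_append.1 hl with hl | hl
        · exact hl'.2 (Or.inr hl)
        · exact hl'.2 (Or.inl ((hσA l).1 hl))
    · ext l
      simp only [List.toFinset_append, List.toFinset_eq_of_perm _ _ hσ, toList_toFinset,
        mem_union, List.mem_toFinset, rest, mem_sdiff]
      have := @alive_subset _ _ L (runSession st π) l
      have := hπ l
      tauto
  have hrest :
      runSession (runSession (runSession st π) σ) rest = runSession (runSession st π) σ := by
    refine runSession_eq_self (nonneg_runSession hnn σ) fun l hl => ?_
    simp only [rest, mem_toList, mem_sdiff, mem_union, not_or] at hl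
    have hdead : Dead (runSession st π) l := by
      by_contra h
      simp only [Dead, not_or] at h
      exact hl.2.1 (mem_alive.2 ⟨hl.1, (hnn.1 _).lt_of_ne' h.1, (hnn.2 _).lt_of_ne' h.2⟩)
    exact dead_runSession hnn hdead σ
  simpa [runSession_append, hrest] using hG.feasible _ hperm b

theorem trade_prefix (hG : Successful L st) {l : B × S} (hl : l ∈ L) :
    Successful (alive L (trade st l)) (trade st l) :=
  hG.runSession_prefix (π := [l]) (List.nodup_singleton l) (by simpa)

theorem trade_trade_prefix (hG : Successful L st) {l l' : B × S} (hl : l ∈ L) (hl' : l' ∈ L)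
    (hne : l ≠ l') : Successful (alive L (trade (trade st l) l')) (trade (trade st l) l') :=
  hG.runSession_prefix (π := [l, l']) (by simpa) (by simp [hl, hl'])

end Successful

end SuccessfulMarkets

section Necessity

variable {B S : Type*} [DecidableEq B] [DecidableEq S] [Fintype B] [Fintype S]
  {L : Finset (B × S)} {st : TState B S}

namespace Successful

variable {b b₁ : B} {s₁ s₂ : S}

/-- Let `K` be the component of `s₂` once `b₁` has traded with `s₁` first; it has zero imbalance.
If `b₁` trades with `s₂` before `s₁`, fewer links stay alive, so `K` is still closed, but `s₂`
has lost supply to `b₁ ∉ K`. -/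
theorem false_of_dem_lt_sup (hG : Successful L st) (h₁ : (b, s₁) ∈ L) (h₂ : (b₁, s₁) ∈ L)
    (h₃ : (b₁, s₂) ∈ L) (hbs₂ : (b, s₂) ∉ L) (hlt : st.dem b₁ < st.sup s₁)
    (hc : ComponentsComplete (alive L (trade st (b₁, s₁)))) : False := by
  have hbb₁ : b ≠ b₁ := by rintro rfl; exact hbs₂ h₃
  have hs₁₂ : s₁ ≠ s₂ := by rintro rfl; exact hbs₂ h₁
  obtain ⟨hd₁, hv⟩ : 0 < st.dem b₁ ∧ 0 < st.sup s₂ := hG.pos _ h₃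
  set K := component (alive L (trade st (b₁, s₁))) (inr s₂)
  have hb₁K : inl b₁ ∉ K := fun h =>
    (dem_pos_of_mem_component h (by simp)).ne' (by simp [hlt.le])
  have hbs₁ : (b, s₁) ∈ alive L (trade st (b₁, s₁)) :=
    hG.mem_alive_trade h₁ (fun h => absurd h hbb₁) fun _ => hlt
  have hs₁K : inr s₁ ∉ K := fun h => hbs₂ <| alive_subset _ _ <|
    hc b s₂ ((linkGraph_adj_inl_inr.2 hbs₁).reachable.trans (mem_component.1 h).symm)
  have hK : imbalance K st = 0 := by
    have : imbalance K (trade st (b₁, s₁)) = 0 :=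
      (hG.trade_prefix h₂).imbalance_eq_zero (linkClosed_component subset_rfl _)
    simpa only [imbalance_trade, hb₁K, hs₁K, if_false, sub_zero, add_zero] using this
  have hsub : alive L (trade (trade st (b₁, s₂)) (b₁, s₁)) ⊆ alive L (trade st (b₁, s₁)) := by
    rintro ⟨x, y⟩ hp
    obtain ⟨hpL, hpd, -⟩ := mem_alive.1 hp
    refine hG.mem_alive_trade hpL (fun h => ?_) fun _ => hlt
    subst h
    have : max 0 (st.dem x - st.sup s₂) ≤ st.sup s₁ := max_le (by linarith) (by linarith)
    simp [hs₁₂, this] at hpd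
  have : imbalance K (trade (trade st (b₁, s₂)) (b₁, s₁)) = 0 :=
    (hG.trade_trade_prefix h₃ h₂ (by simp [hs₁₂.symm])).imbalance_eq_zero
      (linkClosed_component hsub _)
  have hs₂K : inr s₂ ∈ K := mem_component.2 Reachable.rfl
  simp only [imbalance_trade, hb₁K, hs₁K, hs₂K, hK, if_false, if_true] at this
  linarith [lt_min hd₁ hv]

/-- Dual to `false_of_dem_lt_sup`: now `K` is the component of `b`, and trading `(b, s₁)` before
`(b₁, s₁)` makes `b ∈ K` lose demand to `s₁ ∉ K`. -/
theorem false_of_sup_lt_dem (hG : Successful L st) (h₁ : (b, s₁) ∈ L) (h₂ : (b₁, s₁) ∈ L)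
    (h₃ : (b₁, s₂) ∈ L) (hbs₂ : (b, s₂) ∉ L) (hlt : st.sup s₁ < st.dem b₁)
    (hc : ComponentsComplete (alive L (trade st (b₁, s₁)))) : False := by
  have hbb₁ : b ≠ b₁ := by rintro rfl; exact hbs₂ h₃
  have hs₁₂ : s₁ ≠ s₂ := by rintro rfl; exact hbs₂ h₁
  obtain ⟨hd, hu⟩ : 0 < st.dem b ∧ 0 < st.sup s₁ := hG.pos _ h₁
  set K := component (alive L (trade st (b₁, s₁))) (inl b)
  have hs₁K : inr s₁ ∉ K := fun h =>
    (sup_pos_of_mem_component h (by simp)).ne' (by simp [hlt.le])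
  have hb₁s₂ : (b₁, s₂) ∈ alive L (trade st (b₁, s₁)) :=
    hG.mem_alive_trade h₃ (fun _ => hlt) fun h => absurd h hs₁₂.symm
  have hb₁K : inl b₁ ∉ K := fun h => hbs₂ <| alive_subset _ _ <|
    hc b s₂ ((mem_component.1 h).trans (linkGraph_adj_inl_inr.2 hb₁s₂).reachable)
  have hK : imbalance K st = 0 := by
    have : imbalance K (trade st (b₁, s₁)) = 0 :=
      (hG.trade_prefix h₂).imbalance_eq_zero (linkClosed_component subset_rfl _)
    simpa only [imbalance_trade, hb₁K, hs₁K, if_false, sub_zero, add_zero] using this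
  have hsub : alive L (trade (trade st (b, s₁)) (b₁, s₁)) ⊆ alive L (trade st (b₁, s₁)) := by
    rintro ⟨x, y⟩ hp
    obtain ⟨hpL, -, hps⟩ := mem_alive.1 hp
    refine hG.mem_alive_trade hpL (fun _ => hlt) fun h => ?_
    subst h
    have : max 0 (st.sup y - st.dem b) ≤ st.dem b₁ := max_le (by linarith) (by linarith)
    simp [hbb₁.symm, this] at hps
  have : imbalance K (trade (trade st (b, s₁)) (b₁, s₁)) = 0 :=
    (hG.trade_trade_prefix h₁ h₂ (by simp [hbb₁])).imbalance_eq_zero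
      (linkClosed_component hsub _)
  have hbK : inl b ∈ K := mem_component.2 Reachable.rfl
  simp only [imbalance_trade, hb₁K, hs₁K, hbK, hK, if_false, if_true] at this
  linarith [lt_min hd hu]

/-- Trading `(b₁, s₁)` first exhausts both, and `K`, the component of `b`, has zero imbalance.
Trading `(b₁, s₂)` before `(b₁, s₁)` exhausts `b₁` but leaves `s₁` with positive supply, and then
`K ∪ {s₁}` is link-closed, since a buyer linked to `s₁` is, by completeness, linked to a seller of
`K`; yet its imbalance is `-sup s₁ < 0`. -/
theorem false_of_dem_eq_sup (hG : Successful L st) (h₁ : (b, s₁) ∈ L) (h₂ : (b₁, s₁) ∈ L)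
    (h₃ : (b₁, s₂) ∈ L) (hbs₂ : (b, s₂) ∉ L) (heq : st.dem b₁ = st.sup s₁)
    (hc : ComponentsComplete (alive L (trade st (b₁, s₁))))
    (hc' : ComponentsComplete (alive L (trade (trade st (b₁, s₂)) (b₁, s₁)))) : False := by
  have hbb₁ : b ≠ b₁ := by rintro rfl; exact hbs₂ h₃
  have hs₁₂ : s₁ ≠ s₂ := by rintro rfl; exact hbs₂ h₁
  obtain ⟨hd, hu⟩ : 0 < st.dem b ∧ 0 < st.sup s₁ := hG.pos _ h₁
  obtain ⟨-, hv⟩ : 0 < st.dem b₁ ∧ 0 < st.sup s₂ := hG.pos _ h₃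
  set K := component (alive L (trade st (b₁, s₁))) (inl b)
  have hb₁K : inl b₁ ∉ K := fun h =>
    (dem_pos_of_mem_component h (by simpa using hbb₁)).ne' (by simp [heq])
  have hs₁K : inr s₁ ∉ K := fun h =>
    (sup_pos_of_mem_component h (by simp)).ne' (by simp [heq])
  have hs₂K : inr s₂ ∉ K := fun h => hbs₂ (alive_subset _ _ (hc b s₂ (mem_component.1 h)))
  have hK : imbalance K st = 0 := by
    have : imbalance K (trade st (b₁, s₁)) = 0 :=
      (hG.trade_prefix h₂).imbalance_eq_zero (linkClosed_component subset_rfl _)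
    simpa only [imbalance_trade, hb₁K, hs₁K, if_false, sub_zero, add_zero] using this
  have hmem : ∀ p ∈ L, p.1 ≠ b₁ → p.2 ≠ s₁ → p ∈ alive L (trade st (b₁, s₁)) :=
    fun p hp hx hy => hG.mem_alive_trade hp (absurd · hx) (absurd · hy)
  obtain ⟨σ, hσ⟩ := (hG.trade_prefix h₂).exists_mem_of_dem_pos (b := b) (by simpa [hbb₁] using hd)
  have hσK : inr σ ∈ K := mem_component.2 (linkGraph_adj_inl_inr.2 hσ).reachable
  have hσs₁ : σ ≠ s₁ := by rintro rfl; exact hs₁K hσK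
  have hσL : (b, σ) ∈ L := alive_subset _ _ hσ
  have hσs₂ : σ ≠ s₂ := by rintro rfl; exact hbs₂ hσL
  set st' := trade (trade st (b₁, s₂)) (b₁, s₁)
  have hb₁' : st'.dem b₁ = 0 := by simp [st', hs₁₂, heq, hu.le, hv.le]
  have hs₁' : 0 < st'.sup s₁ := by simp [st', hs₁₂, heq, hu, hv]
  have hbs₁' : (b, s₁) ∈ alive L st' := mem_alive.2 ⟨h₁, by simpa [st', hbb₁] using hd, hs₁'⟩
  have hbσ' : (b, σ) ∈ alive L st' := mem_alive.2 ⟨hσL, by simpa [st', hbb₁] using hd,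
    by simpa [st', hσs₁, hσs₂] using (hG.pos _ hσL).2⟩
  have hC : LinkClosed (alive L st') (insert (inr s₁) K) := by
    rintro ⟨β, y⟩ hp
    obtain ⟨hpL, hβ, -⟩ := mem_alive.1 hp
    have hβb₁ : β ≠ b₁ := by rintro rfl; exact hβ.ne' hb₁'
    simp only [mem_insert, reduceCtorEq, false_or, inr.injEq]
    by_cases hy : y = s₁
    · subst hy
      have hβσ : (β, σ) ∈ alive L st' := hc' β σ <|
        ((linkGraph_adj_inl_inr.2 hp).reachable.trans
          (linkGraph_adj_inl_inr.2 hbs₁').symm.reachable).trans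
            (linkGraph_adj_inl_inr.2 hbσ').reachable
      exact iff_of_true (mem_component.2 ((mem_component.1 hσK).trans
        (linkGraph_adj_inl_inr.2 (hmem _ (alive_subset _ _ hβσ) hβb₁ hσs₁)).symm.reachable))
          (Or.inl rfl)
    · rw [or_iff_right hy]
      exact linkClosed_component subset_rfl (inl b) _ (hmem _ hpL hβb₁ hy)
  have : imbalance (insert (inr s₁) K) st' = 0 :=
    (hG.trade_trade_prefix h₃ h₂ (by simp [hs₁₂.symm])).imbalance_eq_zero hC
  have hK' : imbalance K st' = 0 := by
    simp only [st', imbalance_trade, hb₁K, hs₁K, hs₂K, hK, if_false, sub_zero, add_zero]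
  rw [imbalance_insert hs₁K, hK', charge_inr] at this
  linarith

theorem mem_of_path (hG : Successful L st)
    (hIH : ∀ L' ⊂ L, ∀ st', Successful L' st' → ComponentsComplete L')
    (h₁ : (b, s₁) ∈ L) (h₂ : (b₁, s₁) ∈ L) (h₃ : (b₁, s₂) ∈ L) : (b, s₂) ∈ L := by
  by_contra hbs₂
  have hs₁₂ : s₁ ≠ s₂ := by rintro rfl; exact hbs₂ h₁
  have hc := hIH _ (alive_ssubset (seq := [(b₁, s₁)]) hG.nonneg List.mem_cons_self h₂) _
    (hG.trade_prefix h₂)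
  rcases lt_trichotomy (st.dem b₁) (st.sup s₁) with hlt | heq | hgt
  · exact hG.false_of_dem_lt_sup h₁ h₂ h₃ hbs₂ hlt hc
  · exact hG.false_of_dem_eq_sup h₁ h₂ h₃ hbs₂ heq hc <|
      hIH _ (alive_ssubset (seq := [(b₁, s₂), (b₁, s₁)]) hG.nonneg List.mem_cons_self h₃) _
        (hG.trade_trade_prefix h₃ h₂ (by simp [hs₁₂.symm]))
  · exact hG.false_of_sup_lt_dem h₁ h₂ h₃ hbs₂ hgt hc

theorem componentsComplete (hG : Successful L st) : ComponentsComplete L := by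
  induction L using Finset.strongInduction generalizing st with
  | H L ih =>
    exact componentsComplete_of_path fun _ _ _ _ h₁ h₂ h₃ =>
      hG.mem_of_path (fun L' hL' _ hG' => ih L' hL' hG') h₁ h₂ h₃

end Successful

end Necessity

theorem sum_eq_sum_of_forall_component {α β M : Type*} [Fintype α] [Fintype β]
    [AddCommMonoid M] (G : SimpleGraph (α ⊕ β)) (f : α → M) (g : β → M)
    (h : ∀ v, ∑ a ∈ univ.filter (fun a => G.Reachable v (inl a)), f a
      = ∑ b ∈ univ.filter (fun b => G.Reachable v (inr b)), g b) :
    ∑ a, f a = ∑ b, g b := by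
  have := Fintype.ofFinite G.ConnectedComponent
  rw [← sum_fiberwise univ (fun a => G.connectedComponentMk (inl a)) f,
    ← sum_fiberwise univ (fun b => G.connectedComponentMk (inr b)) g]
  refine sum_congr rfl fun c _ => ?_
  induction c using ConnectedComponent.ind with
  | h v => simpa only [ConnectedComponent.eq, reachable_comm] using h v

/-- Necessity: with strictly positive demands and supplies and component-wise
supply equal to demand, if every trading session is feasible then every
connected component is complete bipartite. -/
theorem stmt_5 {B S : Type*} [Fintype B] [Fintype S] [DecidableEq B] [DecidableEq S]
    (L : Finset (B × S)) (D : B → ℝ) (Sup : S → ℝ)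
    (hD : ∀ b, 0 < D b) (hS : ∀ s, 0 < Sup s)
    (hbal : ∀ v : B ⊕ S,
      ∑ b ∈ Finset.univ.filter (fun b => (linkGraph L).Reachable v (Sum.inl b)), D b
        = ∑ s ∈ Finset.univ.filter (fun s => (linkGraph L).Reachable v (Sum.inr s)), Sup s)
    (hsucc : ∀ seq : List (B × S), seq.Perm L.toList →
      ∀ b, (runSession ⟨D, Sup⟩ seq).dem b = 0) :
    ∀ b s, (linkGraph L).Reachable (Sum.inl b) (Sum.inr s) → (b, s) ∈ L := by
  have hG : Successful L ⟨D, Sup⟩ :=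
    { nonneg := ⟨fun b => (hD b).le, fun s => (hS s).le⟩
      pos := fun p _ => ⟨hD p.1, hS p.2⟩
      sum_eq := sum_eq_sum_of_forall_component _ D Sup fun v => by convert hbal v
      feasible := hsucc }
  exact hG.componentsComplete
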